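/- Let (U, S, Z, X, Y) be finite discrete random variables with joint pmf p(s) p(u) p(x | u, s) p(y | x, x_r(u, z(x,s)), s), where Z = z(X, S) and X_r = x_r(U, Z) are deterministic functions. Suppose M is uniform on [1:2^{nR}], independent of the i.i.d. state sequence S^n, with Z_i = z(X_i, S_i), X_{r,i} a function of Z^i, X_i a function of (M, S^n), Y_i conditionally independent of the past given (X_i, X_{r,i}, S_i), and H(M|Y^n, S^n) <= n*eps_n. Then with U_i = (Z^{i-1}, S^{i-1}), nR <= sum_{i=1}^n H(Z_i | U_i, S_i) + sum_{i=1}^n I(X_i; Y_i | U_i, Z_i, S_i) + n*eps_n. -/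

import Mathlib

open scoped BigOperators Classical
open Filter

noncomputable section

/-- Probability that the random variable `f` equals `a` under the pmf `p`. -/
def prob {Ω α : Type*} [Fintype Ω] (p : Ω → ℝ) (f : Ω → α) (a : α) : ℝ :=
  ∑ ω, if f ω = a then p ω else 0

/-- `p` is a probability mass function. -/
def IsPMF {Ω : Type*} [Fintype Ω] (p : Ω → ℝ) : Prop :=
  (∀ ω, 0 ≤ p ω) ∧ ∑ ω, p ω = 1

/-- Shannon entropy (base 2). -/
def Hent {Ω α : Type*} [Fintype Ω] [Fintype α] (p : Ω → ℝ) (f : Ω → α) : ℝ :=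
  - ∑ a, prob p f a * Real.logb 2 (prob p f a)

/-- Conditional entropy H(f | g). -/
def Hcond {Ω α β : Type*} [Fintype Ω] [Fintype α] [Fintype β]
    (p : Ω → ℝ) (f : Ω → α) (g : Ω → β) : ℝ :=
  Hent p (fun ω => (f ω, g ω)) - Hent p g

/-- Mutual information I(f; g). -/
def Imut {Ω α β : Type*} [Fintype Ω] [Fintype α] [Fintype β]
    (p : Ω → ℝ) (f : Ω → α) (g : Ω → β) : ℝ :=
  Hent p f + Hent p g - Hent p (fun ω => (f ω, g ω))

/-- Conditional mutual information I(f; g | h). -/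
def Icond {Ω α β γ : Type*} [Fintype Ω] [Fintype α] [Fintype β] [Fintype γ]
    (p : Ω → ℝ) (f : Ω → α) (g : Ω → β) (h : Ω → γ) : ℝ :=
  Hcond p f h + Hcond p g h - Hcond p (fun ω => (f ω, g ω)) h

/-- Conditional independence of `f` and `g` given `h` under pmf `p`. -/
def CondIndepFun {Ω α β γ : Type*} [Fintype Ω]
    (p : Ω → ℝ) (f : Ω → α) (g : Ω → β) (h : Ω → γ) : Prop :=
  ∀ a b c, prob p (fun ω => (f ω, g ω, h ω)) (a, b, c) * prob p h c
    = prob p (fun ω => (f ω, h ω)) (a, c) * prob p (fun ω => (g ω, h ω)) (b, c)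

/-!
Telescope the equivocation `H(M | Y^k, Z^k, S^n)` from `k = 0`, where it is `H(M) = nR` because
`M` is independent of `S^n`, down to `k = n`, where Fano bounds it by `nε`. The decrement at step
`i` is `I(M; Y_i, Z_i | Y^{i-1}, Z^{i-1}, S^n) = H(Y_i, Z_i | ⋯) - H(Y_i, Z_i | M, ⋯)`. Coarsening
the first conditioning to `(U_i, S_i)` and applying the chain rule gives
`H(Z_i | U_i, S_i) + H(Y_i | U_i, Z_i, S_i)`. The past in the second is a function of
`(M, S^n, Y^{i-1})`; refining to these and `(X_i, X_{r,i}, S_i)` makes `Z_i = z(X_i, S_i)`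
redundant, and memorylessness leaves `H(Y_i | X_i, X_{r,i}, S_i)`, which is at least
`H(Y_i | X_i, U_i, Z_i, S_i)` because the relay input is a function of `Z^i`.

Conditioning reducing entropy, `I(f; g | h) ≥ 0`, is Gibbs' inequality against
`p(a|c) p(b|c) p(c)`.
-/

open Function

section Entropy

variable {Ω ι α β γ : Type*} [Fintype Ω] {p : Ω → ℝ}

lemma sum_mul_congr_of_pos {F G : Ω → ℝ} (hp : ∀ ω, 0 ≤ p ω)
    (h : ∀ ω, 0 < p ω → F ω = G ω) : ∑ ω, p ω * F ω = ∑ ω, p ω * G ω := by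
  refine Finset.sum_congr rfl fun ω _ => ?_
  rcases (hp ω).eq_or_lt with h0 | hpos
  · simp [← h0]
  · rw [h ω hpos]

theorem sum_mul_log_sub_log_nonneg [Fintype ι] {r q : ι → ℝ} (hr : ∀ i, 0 ≤ r i)
    (hq : ∀ i, 0 ≤ q i) (hsum : ∑ i, q i ≤ ∑ i, r i) (hpos : ∀ i, 0 < r i → 0 < q i) :
    0 ≤ ∑ i, r i * (Real.log (r i) - Real.log (q i)) := by
  have hterm : ∀ i, r i - q i ≤ r i * (Real.log (r i) - Real.log (q i)) := by
    intro i
    rcases (hr i).eq_or_lt with h0 | hri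
    · simp [← h0, hq i]
    · have hqi := hpos i hri
      have hlog := Real.one_sub_inv_le_log_of_pos (div_pos hri hqi)
      rw [Real.log_div hri.ne' hqi.ne', inv_div] at hlog
      have := mul_le_mul_of_nonneg_left hlog hri.le
      rwa [mul_sub, mul_one, mul_div_cancel₀ _ hri.ne'] at this
  have := Finset.sum_le_sum fun i (_ : i ∈ Finset.univ) => hterm i
  rw [Finset.sum_sub_distrib] at this
  linarith

lemma prob_nonneg (hp : ∀ ω, 0 ≤ p ω) (f : Ω → α) (a : α) : 0 ≤ prob p f a :=
  Finset.sum_nonneg fun ω _ => by split_ifs <;> simp [hp ω]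

lemma sum_prob_mul [Fintype α] (f : Ω → α) (F : α → ℝ) :
    ∑ a, prob p f a * F a = ∑ ω, p ω * F (f ω) := by
  simp only [prob, Finset.sum_mul, ite_mul, zero_mul]
  rw [Finset.sum_comm]
  simp

lemma sum_prob [Fintype α] (f : Ω → α) : ∑ a, prob p f a = ∑ ω, p ω := by
  simpa using sum_prob_mul (p := p) f fun _ => (1 : ℝ)

lemma sum_prob_pair_left [Fintype α] (f : Ω → α) (h : Ω → γ) (c : γ) :
    ∑ a, prob p (fun ω => (f ω, h ω)) (a, c) = prob p h c := by
  simp only [prob, Prod.mk.injEq]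
  rw [Finset.sum_comm]
  refine Finset.sum_congr rfl fun ω _ => ?_
  by_cases hc : h ω = c <;> simp [hc]

lemma exists_eq_of_prob_ne_zero {f : Ω → α} {a : α} (h : prob p f a ≠ 0) : ∃ ω, f ω = a := by
  by_contra! hne
  exact h (Finset.sum_eq_zero fun ω _ => if_neg (hne ω))

lemma prob_apply_pos (hp : ∀ ω, 0 ≤ p ω) (f : Ω → α) {ω : Ω} (hω : 0 < p ω) :
    0 < prob p f (f ω) := by
  refine hω.trans_le ?_
  unfold prob
  convert Finset.single_le_sum (f := fun ω' => if f ω' = f ω then p ω' else 0)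
    (fun ω' _ => by split_ifs <;> simp [hp ω']) (Finset.mem_univ ω)
  simp

lemma prob_apply_le_of_factorsThrough (hp : ∀ ω, 0 ≤ p ω) {f : Ω → α} {g : Ω → β}
    (hgf : g.FactorsThrough f) (ω : Ω) : prob p f (f ω) ≤ prob p g (g ω) := by
  refine Finset.sum_le_sum fun ω' _ => ?_
  by_cases hf : f ω' = f ω
  · simp [hf, hgf hf]
  · split_ifs <;> simp [hp ω']

lemma prob_apply_eq_of_factorsThrough {f : Ω → α} {g : Ω → β} (hgf : g.FactorsThrough f)
    (hfg : f.FactorsThrough g) (ω : Ω) : prob p f (f ω) = prob p g (g ω) :=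
  Finset.sum_congr rfl fun _ _ => if_congr ⟨fun h => hgf h, fun h => hfg h⟩ rfl rfl

lemma hent_eq_sum [Fintype α] (f : Ω → α) :
    Hent p f = -∑ ω, p ω * Real.logb 2 (prob p f (f ω)) := by
  rw [Hent, sum_prob_mul f fun a => Real.logb 2 (prob p f a)]

lemma hent_eq_of_factorsThrough [Fintype α] [Fintype β] {f : Ω → α} {g : Ω → β}
    (hgf : g.FactorsThrough f) (hfg : f.FactorsThrough g) : Hent p f = Hent p g := by
  simp only [hent_eq_sum, prob_apply_eq_of_factorsThrough hgf hfg]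

lemma hent_of_uniform [Fintype α] {f : Ω → α} (hf : ∀ a, prob p f a = 1 / Fintype.card α) :
    Hent p f = Real.logb 2 (Fintype.card α) := by
  simp only [Hent, hf, Finset.sum_const, Finset.card_univ, nsmul_eq_mul, one_div, Real.logb_inv]
  rcases eq_or_ne (Fintype.card α : ℝ) 0 with h | h
  · simp [h]
  · field_simp

def condIndepProb (p : Ω → ℝ) (f : Ω → α) (g : Ω → β) (h : Ω → γ) (x : (α × β) × γ) : ℝ :=
  prob p (fun ω => (f ω, h ω)) (x.1.1, x.2) * prob p (fun ω => (g ω, h ω)) (x.1.2, x.2)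
    / prob p h x.2

lemma condIndepProb_pos (hp : ∀ ω, 0 ≤ p ω) {f : Ω → α} {g : Ω → β} {h : Ω → γ}
    {x : (α × β) × γ} (hx : 0 < prob p (fun ω => ((f ω, g ω), h ω)) x) :
    0 < condIndepProb p f g h x := by
  obtain ⟨ω, rfl⟩ := exists_eq_of_prob_ne_zero hx.ne'
  refine div_pos (mul_pos ?_ ?_) ?_
  all_goals
    refine hx.trans_le (prob_apply_le_of_factorsThrough hp (fun _ _ hab => ?_) ω)
    simp only [Prod.mk.injEq] at hab ⊢
    tauto

variable [Fintype α] [Fintype β] [Fintype γ]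

lemma hcond_eq_of_factorsThrough (f : Ω → α) {g : Ω → β} {h : Ω → γ}
    (hhg : h.FactorsThrough g) (hgh : g.FactorsThrough h) : Hcond p f g = Hcond p f h := by
  unfold Hcond
  congr 1
  · exact hent_eq_of_factorsThrough
      (fun _ _ hab => by simp only [Prod.mk.injEq] at hab ⊢; exact ⟨hab.1, hhg hab.2⟩)
      (fun _ _ hab => by simp only [Prod.mk.injEq] at hab ⊢; exact ⟨hab.1, hgh hab.2⟩)
  · exact hent_eq_of_factorsThrough hhg hgh

lemma hcond_pair_eq_of_factorsThrough (f : Ω → α) {g : Ω → β} {h : Ω → γ}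
    (hgh : g.FactorsThrough h) : Hcond p (fun ω => (f ω, g ω)) h = Hcond p f h := by
  unfold Hcond
  congr 1
  exact hent_eq_of_factorsThrough
    (fun _ _ hab => by simp only [Prod.mk.injEq] at hab ⊢; exact ⟨hab.1.1, hab.2⟩)
    (fun _ _ hab => by simp only [Prod.mk.injEq] at hab ⊢; exact ⟨⟨hab.1, hgh hab.2⟩, hab.2⟩)

lemma hcond_chain (f : Ω → α) (g : Ω → β) (h : Ω → γ) :
    Hcond p (fun ω => (f ω, g ω)) h = Hcond p g h + Hcond p f (fun ω => (g ω, h ω)) := by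
  have hassoc : Hent p (fun ω => ((f ω, g ω), h ω)) = Hent p (fun ω => (f ω, g ω, h ω)) :=
    hent_eq_of_factorsThrough (fun _ _ hab => by simp_all) (fun _ _ hab => by simp_all)
  simp only [Hcond, hassoc]
  ring

lemma icond_eq_hcond_sub (f : Ω → α) (g : Ω → β) (h : Ω → γ) :
    Icond p f g h = Hcond p f h - Hcond p f (fun ω => (g ω, h ω)) := by
  rw [Icond, hcond_chain]
  ring

lemma icond_comm (f : Ω → α) (g : Ω → β) (h : Ω → γ) : Icond p f g h = Icond p g f h := by
  have hswap : Hent p (fun ω => ((f ω, g ω), h ω)) = Hent p (fun ω => ((g ω, f ω), h ω)) :=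
    hent_eq_of_factorsThrough (fun _ _ hab => by simp_all) (fun _ _ hab => by simp_all)
  simp only [Icond, Hcond, hswap]
  ring

lemma hcond_eq_hent_of_indep (hp : ∀ ω, 0 ≤ p ω) {f : Ω → α} {g : Ω → β}
    (hind : ∀ a b, prob p (fun ω => (f ω, g ω)) (a, b) = prob p f a * prob p g b) :
    Hcond p f g = Hent p f := by
  have hsplit : ∑ ω, p ω * Real.logb 2 (prob p (fun ω => (f ω, g ω)) (f ω, g ω))
      = ∑ ω, p ω * (Real.logb 2 (prob p f (f ω)) + Real.logb 2 (prob p g (g ω))) :=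
    sum_mul_congr_of_pos hp fun ω hω => by
      rw [hind, Real.logb_mul (prob_apply_pos hp f hω).ne' (prob_apply_pos hp g hω).ne']
  simp only [Hcond, hent_eq_sum, hsplit, mul_add, Finset.sum_add_distrib]
  ring

lemma hcond_eq_of_condIndepFun (hp : ∀ ω, 0 ≤ p ω) {f : Ω → α} {g : Ω → β} {h : Ω → γ}
    (hci : CondIndepFun p f g h) : Hcond p f (fun ω => (g ω, h ω)) = Hcond p f h := by
  have hlog : ∑ ω, p ω * (Real.logb 2 (prob p (fun ω => (f ω, g ω, h ω)) (f ω, g ω, h ω))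
        + Real.logb 2 (prob p h (h ω)))
      = ∑ ω, p ω * (Real.logb 2 (prob p (fun ω => (f ω, h ω)) (f ω, h ω))
        + Real.logb 2 (prob p (fun ω => (g ω, h ω)) (g ω, h ω))) :=
    sum_mul_congr_of_pos hp fun ω hω => by
      rw [← Real.logb_mul (prob_apply_pos hp _ hω).ne' (prob_apply_pos hp h hω).ne',
        ← Real.logb_mul (prob_apply_pos hp (fun ω => (f ω, h ω)) hω).ne'
          (prob_apply_pos hp (fun ω => (g ω, h ω)) hω).ne', hci]
  simp only [mul_add, Finset.sum_add_distrib] at hlog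
  simp only [Hcond, hent_eq_sum]
  linarith

lemma sum_condIndepProb (f : Ω → α) (g : Ω → β) (h : Ω → γ) :
    ∑ x, condIndepProb p f g h x = ∑ ω, p ω := by
  calc ∑ x, condIndepProb p f g h x
      = ∑ c, (∑ a, prob p (fun ω => (f ω, h ω)) (a, c))
          * (∑ b, prob p (fun ω => (g ω, h ω)) (b, c)) / prob p h c := by
        simp only [condIndepProb, Fintype.sum_prod_type, Finset.sum_mul_sum, Finset.sum_div]
        exact (Finset.sum_congr rfl fun _ _ => Finset.sum_comm).trans Finset.sum_comm
    _ = ∑ c, prob p h c := by simp only [sum_prob_pair_left, mul_self_div_self]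
    _ = ∑ ω, p ω := sum_prob h

lemma icond_eq_sum_condIndepProb (hp : ∀ ω, 0 ≤ p ω) (f : Ω → α) (g : Ω → β) (h : Ω → γ) :
    Icond p f g h = ∑ x, prob p (fun ω => ((f ω, g ω), h ω)) x
      * (Real.logb 2 (prob p (fun ω => ((f ω, g ω), h ω)) x)
        - Real.logb 2 (condIndepProb p f g h x)) := by
  rw [sum_prob_mul (fun ω => ((f ω, g ω), h ω)) fun x =>
    Real.logb 2 (prob p (fun ω => ((f ω, g ω), h ω)) x) - Real.logb 2 (condIndepProb p f g h x)]
  have hsplit : ∑ ω, p ω * (Real.logb 2 (prob p (fun ω => ((f ω, g ω), h ω)) ((f ω, g ω), h ω))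
        - Real.logb 2 (condIndepProb p f g h ((f ω, g ω), h ω)))
      = ∑ ω, p ω * (Real.logb 2 (prob p (fun ω => ((f ω, g ω), h ω)) ((f ω, g ω), h ω))
        + Real.logb 2 (prob p h (h ω)) - Real.logb 2 (prob p (fun ω => (f ω, h ω)) (f ω, h ω))
        - Real.logb 2 (prob p (fun ω => (g ω, h ω)) (g ω, h ω))) :=
    sum_mul_congr_of_pos hp fun ω hω => by
      have hfh := prob_apply_pos hp (fun ω => (f ω, h ω)) hω
      have hgh := prob_apply_pos hp (fun ω => (g ω, h ω)) hω
      rw [condIndepProb, Real.logb_div (mul_pos hfh hgh).ne' (prob_apply_pos hp h hω).ne',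
        Real.logb_mul hfh.ne' hgh.ne']
      ring
  rw [hsplit]
  simp only [Icond, Hcond, hent_eq_sum, mul_add, mul_sub, Finset.sum_add_distrib,
    Finset.sum_sub_distrib]
  ring

theorem icond_nonneg (hp : ∀ ω, 0 ≤ p ω) (f : Ω → α) (g : Ω → β) (h : Ω → γ) :
    0 ≤ Icond p f g h := by
  have hgibbs := sum_mul_log_sub_log_nonneg (prob_nonneg hp (fun ω => ((f ω, g ω), h ω)))
    (q := condIndepProb p f g h)
    (fun x => div_nonneg (mul_nonneg (prob_nonneg hp _ _) (prob_nonneg hp _ _))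
      (prob_nonneg hp _ _))
    (by rw [sum_condIndepProb, sum_prob]) fun _ hx => condIndepProb_pos hp hx
  rw [icond_eq_sum_condIndepProb hp]
  have hbase : ∀ x y : ℝ, Real.logb 2 x - Real.logb 2 y = (Real.log x - Real.log y) / Real.log 2 :=
    fun x y => (sub_div _ _ _).symm
  simp only [hbase, ← mul_div_assoc, ← Finset.sum_div]
  exact div_nonneg hgibbs (Real.log_pos one_lt_two).le

lemma hcond_le_of_factorsThrough (hp : ∀ ω, 0 ≤ p ω) (f : Ω → α) {h : Ω → β} {h' : Ω → γ}
    (hh : h'.FactorsThrough h) : Hcond p f h ≤ Hcond p f h' := by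
  have hpair : Hcond p f h = Hcond p f (fun ω => (h ω, h' ω)) :=
    hcond_eq_of_factorsThrough f (fun _ _ hab => Prod.ext hab (hh hab))
      (fun _ _ hab => congrArg Prod.fst hab)
  have := icond_nonneg hp f h h'
  rw [icond_eq_hcond_sub] at this
  linarith

end Entropy

section SingleLetter

variable {Ω 𝕄 𝒱 𝒜 𝒰 𝒮 𝒳 𝒳r 𝒵 𝒴 : Type*} [Fintype Ω] [Fintype 𝕄] [Fintype 𝒱] [Fintype 𝒜]
  [Fintype 𝒰] [Fintype 𝒮] [Fintype 𝒳] [Fintype 𝒳r] [Fintype 𝒵] [Fintype 𝒴] {p : Ω → ℝ}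

theorem icond_le_hcond_add_icond (hp : ∀ ω, 0 ≤ p ω) {M : Ω → 𝕄} {V : Ω → 𝒱} {A : Ω → 𝒜}
    {U : Ω → 𝒰} {S : Ω → 𝒮} {X : Ω → 𝒳} {Xr : Ω → 𝒳r} {Z : Ω → 𝒵} {Y : Ω → 𝒴}
    (hZ : Z.FactorsThrough fun ω => (X ω, S ω))
    (hMV : (fun ω => (M ω, V ω)).FactorsThrough fun ω => (A ω, X ω, Xr ω, S ω))
    (hUS : (fun ω => (U ω, S ω)).FactorsThrough V)
    (hXr : (fun ω => (X ω, Xr ω, S ω)).FactorsThrough fun ω => (X ω, U ω, Z ω, S ω))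
    (hmem : CondIndepFun p Y A fun ω => (X ω, Xr ω, S ω)) :
    Icond p M (fun ω => (Y ω, Z ω)) V
      ≤ Hcond p Z (fun ω => (U ω, S ω)) + Icond p X Y (fun ω => (U ω, Z ω, S ω)) := by
  have hrelay : Hcond p (fun ω => (Y ω, Z ω)) V
      ≤ Hcond p Z (fun ω => (U ω, S ω)) + Hcond p Y (fun ω => (U ω, Z ω, S ω)) :=
    calc _ ≤ Hcond p (fun ω => (Y ω, Z ω)) (fun ω => (U ω, S ω)) :=
          hcond_le_of_factorsThrough hp _ hUS
      _ = Hcond p Z (fun ω => (U ω, S ω)) + Hcond p Y (fun ω => (Z ω, U ω, S ω)) :=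
          hcond_chain _ _ _
      _ = _ := by
          rw [hcond_eq_of_factorsThrough Y (h := fun ω => (U ω, Z ω, S ω))
            (fun _ _ hab => by simp_all) (fun _ _ hab => by simp_all)]
  have hchannel : Hcond p Y (fun ω => (X ω, U ω, Z ω, S ω))
      ≤ Hcond p (fun ω => (Y ω, Z ω)) (fun ω => (M ω, V ω)) :=
    calc _ ≤ Hcond p Y (fun ω => (X ω, Xr ω, S ω)) := hcond_le_of_factorsThrough hp Y hXr
      _ = Hcond p Y (fun ω => (A ω, X ω, Xr ω, S ω)) := (hcond_eq_of_condIndepFun hp hmem).symm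
      _ = Hcond p (fun ω => (Y ω, Z ω)) (fun ω => (A ω, X ω, Xr ω, S ω)) := by
          refine (hcond_pair_eq_of_factorsThrough Y fun _ _ hab => hZ ?_).symm
          simp only [Prod.mk.injEq] at hab ⊢
          exact ⟨hab.2.1, hab.2.2.2⟩
      _ ≤ _ := hcond_le_of_factorsThrough hp _ hMV
  rw [icond_comm M, icond_eq_hcond_sub, icond_comm X, icond_eq_hcond_sub]
  linarith

end SingleLetter

section Relay

variable {Ω 𝕄 𝒮 𝒳 𝒳r 𝒵 𝒴 : Type*} [Fintype Ω] [Fintype 𝕄] [Fintype 𝒮] [Fintype 𝒳]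
  [Fintype 𝒳r] [Fintype 𝒵] [Fintype 𝒴] {n : ℕ}

-- `(Y^k, Z^k)` as a single random variable: the slots from time `k` on are `none`.
def revealedPast (Y : Fin n → Ω → 𝒴) (Z : Fin n → Ω → 𝒵) (k : ℕ) (ω : Ω) :
    Fin n → Option (𝒴 × 𝒵) :=
  fun j => if (j : ℕ) < k then some (Y j ω, Z j ω) else none

def pastEquivocation (p : Ω → ℝ) (M : Ω → 𝕄) (S : Fin n → Ω → 𝒮) (Y : Fin n → Ω → 𝒴)
    (Z : Fin n → Ω → 𝒵) (k : ℕ) : ℝ :=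
  Hcond p M fun ω => (revealedPast Y Z k ω, fun j => S j ω)

variable {p : Ω → ℝ} {M : Ω → 𝕄} {S : Fin n → Ω → 𝒮} {X : Fin n → Ω → 𝒳}
  {Xr : Fin n → Ω → 𝒳r} {Z : Fin n → Ω → 𝒵} {Y : Fin n → Ω → 𝒴}

lemma pastEquivocation_zero (hp : ∀ ω, 0 ≤ p ω)
    (hind : ∀ m sv, prob p (fun ω => (M ω, fun i => S i ω)) (m, sv)
      = prob p M m * prob p (fun ω i => S i ω) sv) :
    pastEquivocation p M S Y Z 0 = Hent p M := by
  rw [pastEquivocation, hcond_eq_of_factorsThrough M (h := fun ω i => S i ω)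
    (fun _ _ hab => congrArg Prod.snd hab)
    (fun _ _ hab => Prod.ext (funext fun j => by simp [revealedPast]) hab)]
  exact hcond_eq_hent_of_indep hp hind

lemma pastEquivocation_le (hp : ∀ ω, 0 ≤ p ω) :
    pastEquivocation p M S Y Z n ≤ Hcond p M (fun ω => (fun i => Y i ω, fun i => S i ω)) :=
  hcond_le_of_factorsThrough hp M fun _ _ hab => by
    simp only [Prod.mk.injEq] at hab ⊢
    refine ⟨funext fun i => ?_, hab.2⟩
    have hi := congrFun hab.1 i
    simp only [revealedPast, Fin.is_lt, if_true, Option.some.injEq, Prod.mk.injEq] at hi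
    exact hi.1

lemma pastEquivocation_sub_succ (i : Fin n) :
    pastEquivocation p M S Y Z i - pastEquivocation p M S Y Z (i + 1)
      = Icond p M (fun ω => (Y i ω, Z i ω)) (fun ω => (revealedPast Y Z i ω, fun j => S j ω)) := by
  rw [icond_eq_hcond_sub, pastEquivocation, pastEquivocation]
  congr 1
  refine hcond_eq_of_factorsThrough M ?_ ?_
  · intro a b hab
    simp only [Prod.mk.injEq] at hab ⊢
    refine ⟨?_, funext fun j => ?_, hab.2⟩
    · simpa [revealedPast] using congrFun hab.1 i
    · have hj := congrFun hab.1 j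
      by_cases h : (j : ℕ) < i
      · simpa [revealedPast, h, Nat.lt_succ_of_lt h] using hj
      · simp [revealedPast, h]
  · intro a b hab
    simp only [Prod.mk.injEq] at hab ⊢
    refine ⟨funext fun j => ?_, hab.2.2⟩
    have hj := congrFun hab.2.1 j
    simp only [revealedPast] at hj ⊢
    rcases lt_trichotomy (j : ℕ) i with h | h | h
    · simpa [h, Nat.lt_succ_of_lt h] using hj
    · have : j = i := Fin.ext h
      subst this
      simp [hab.1.1, hab.1.2]
    · simp [Nat.not_lt.2 h]

lemma pastEquivocation_sub_succ_le (hp : ∀ ω, 0 ≤ p ω) {z : 𝒳 → 𝒮 → 𝒵}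
    (hz : ∀ i ω, Z i ω = z (X i ω) (S i ω)) {fX : Fin n → 𝕄 → (Fin n → 𝒮) → 𝒳}
    (hfX : ∀ i ω, X i ω = fX i (M ω) (fun j => S j ω))
    {fR : (i : Fin n) → ({j : Fin n // j ≤ i} → 𝒵) → 𝒳r}
    (hfR : ∀ i ω, Xr i ω = fR i (fun j => Z j.1 ω)) (i : Fin n)
    (hmem : CondIndepFun p (Y i)
        (fun ω => (M ω, fun j => S j ω, fun j : {j : Fin n // j < i} => Y j.1 ω))
        (fun ω => (X i ω, Xr i ω, S i ω))) :
    pastEquivocation p M S Y Z i - pastEquivocation p M S Y Z (i + 1)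
      ≤ Hcond p (Z i)
        (fun ω => ((fun j : {j : Fin n // j < i} => Z j.1 ω,
                    fun j : {j : Fin n // j < i} => S j.1 ω), S i ω))
      + Icond p (X i) (Y i)
        (fun ω => ((fun j : {j : Fin n // j < i} => Z j.1 ω,
                    fun j : {j : Fin n // j < i} => S j.1 ω), Z i ω, S i ω)) := by
  rw [pastEquivocation_sub_succ]
  refine icond_le_hcond_add_icond hp ?_ ?_ ?_ ?_ hmem
  · intro a b hab
    simp only [Prod.mk.injEq] at hab
    rw [hz, hz, hab.1, hab.2]
  · intro a b hab
    simp only [Prod.mk.injEq] at hab ⊢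
    obtain ⟨⟨hM, hS, hY⟩, -⟩ := hab
    refine ⟨hM, funext fun j => ?_, hS⟩
    simp only [revealedPast]
    split_ifs with hj
    · have hYj : Y j a = Y j b := congrFun hY ⟨j, hj⟩
      have hSj : S j a = S j b := congrFun hS j
      rw [hz j a, hz j b, hfX j a, hfX j b, hM, hS, hSj, hYj]
    · rfl
  · intro a b hab
    simp only [Prod.mk.injEq] at hab ⊢
    refine ⟨⟨funext fun j => ?_, funext fun j => congrFun hab.2 j.1⟩, congrFun hab.2 i⟩
    have hj := congrFun hab.1 j.1
    simp only [revealedPast, if_pos (show (j.1 : ℕ) < i from j.2), Option.some.injEq,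
      Prod.mk.injEq] at hj
    exact hj.2
  · intro a b hab
    simp only [Prod.mk.injEq] at hab ⊢
    obtain ⟨hX, ⟨hZp, -⟩, hZi, hSi⟩ := hab
    refine ⟨hX, ?_, hSi⟩
    rw [hfR, hfR]
    congr 1
    funext j
    rcases j.2.lt_or_eq with hj | hj
    · exact congrFun hZp ⟨j.1, hj⟩
    · rw [hj]
      exact hZi

end Relay

theorem relay_without_delay_converse_one_general
    {Ω 𝕄 𝒮 𝒳 𝒳r 𝒵 𝒴 : Type*} [Fintype Ω] [Fintype 𝕄] [Fintype 𝒮]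
    [Fintype 𝒳] [Fintype 𝒳r] [Fintype 𝒵] [Fintype 𝒴]
    (p : Ω → ℝ) (hp : IsPMF p) (n : ℕ) (R eps : ℝ)
    (M : Ω → 𝕄) (S : Fin n → Ω → 𝒮) (X : Fin n → Ω → 𝒳)
    (Xr : Fin n → Ω → 𝒳r) (Z : Fin n → Ω → 𝒵) (Y : Fin n → Ω → 𝒴)
    (hcard : (Fintype.card 𝕄 : ℝ) = 2 ^ ((n : ℝ) * R))
    (hMuniform : ∀ m, prob p M m = 1 / Fintype.card 𝕄)
    (hMindepS : ∀ m sv, prob p (fun ω => (M ω, fun i => S i ω)) (m, sv)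
        = prob p M m * prob p (fun ω i => S i ω) sv)
    (hZ : ∃ z : 𝒳 → 𝒮 → 𝒵, ∀ (i : Fin n) ω, Z i ω = z (X i ω) (S i ω))
    (hX : ∀ i : Fin n, ∃ f : 𝕄 → (Fin n → 𝒮) → 𝒳, ∀ ω, X i ω = f (M ω) (fun j => S j ω))
    (hXr : ∀ i : Fin n, ∃ f : ({j : Fin n // j ≤ i} → 𝒵) → 𝒳r,
        ∀ ω, Xr i ω = f (fun j => Z j.1 ω))
    (hmem : ∀ i : Fin n, CondIndepFun p (Y i)
        (fun ω => (M ω, fun j => S j ω, fun j : {j : Fin n // j < i} => Y j.1 ω))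
        (fun ω => (X i ω, Xr i ω, S i ω)))
    (hFano : Hcond p M (fun ω => (fun i => Y i ω, fun i => S i ω)) ≤ n * eps) :
    (n : ℝ) * R ≤
      (∑ i : Fin n, Hcond p (Z i)
        (fun ω => ((fun j : {j : Fin n // j < i} => Z j.1 ω,
                    fun j : {j : Fin n // j < i} => S j.1 ω), S i ω)))
      + (∑ i : Fin n, Icond p (X i) (Y i)
        (fun ω => ((fun j : {j : Fin n // j < i} => Z j.1 ω,
                    fun j : {j : Fin n // j < i} => S j.1 ω), Z i ω, S i ω)))
      + n * eps := by
  obtain ⟨z, hz⟩ := hZ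
  choose fX hfX using hX
  choose fR hfR using hXr
  set E := pastEquivocation p M S Y Z with hE
  have hstart : E 0 = n * R := by
    rw [hE, pastEquivocation_zero hp.1 hMindepS, hent_of_uniform hMuniform, hcard,
      Real.logb_rpow two_pos (by norm_num)]
  have hend : E n ≤ n * eps := (pastEquivocation_le hp.1).trans hFano
  have hsteps := Finset.sum_le_sum fun i (_ : i ∈ Finset.univ) =>
    pastEquivocation_sub_succ_le hp.1 hz hfX hfR i (hmem i)
  rw [Fin.sum_univ_eq_sum_range (fun k => E k - E (k + 1)), Finset.sum_range_sub',
    Finset.sum_add_distrib] at hsteps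
  linarith

/-- Converse bound for the state-dependent semideterministic relay-without-delay
channel (Theorem 3, first bound): with `Z_i = z(X_i, S_i)`, `X_{r,i}` a function of
`Z^i`, `X_i` a function of `(M, S^n)`, `M` uniform and independent of the i.i.d.
state sequence, memoryless channel, and Fano's bound, we have with
`U_i = (Z^{i-1}, S^{i-1})`:
`nR ≤ ∑ H(Z_i | U_i, S_i) + ∑ I(X_i; Y_i | U_i, Z_i, S_i) + n·ε_n`. -/
theorem relay_without_delay_converse_one
    {Ω 𝕄 𝒮 𝒳 𝒳r 𝒵 𝒴 : Type*} [Fintype Ω] [Fintype 𝕄] [Fintype 𝒮]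
    [Fintype 𝒳] [Fintype 𝒳r] [Fintype 𝒵] [Fintype 𝒴]
    (p : Ω → ℝ) (hp : IsPMF p) (n : ℕ) (hn : 0 < n) (R eps : ℝ)
    (M : Ω → 𝕄) (S : Fin n → Ω → 𝒮) (X : Fin n → Ω → 𝒳)
    (Xr : Fin n → Ω → 𝒳r) (Z : Fin n → Ω → 𝒵) (Y : Fin n → Ω → 𝒴)
    (hcard : (Fintype.card 𝕄 : ℝ) = 2 ^ ((n : ℝ) * R))
    (hMuniform : ∀ m, prob p M m = 1 / Fintype.card 𝕄)
    (hMindepS : ∀ m sv, prob p (fun ω => (M ω, fun i => S i ω)) (m, sv)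
        = prob p M m * prob p (fun ω i => S i ω) sv)
    (hiid : ∃ q : 𝒮 → ℝ, (∀ s, 0 ≤ q s) ∧ (∑ s, q s = 1) ∧
        ∀ sv : Fin n → 𝒮, prob p (fun ω i => S i ω) sv = ∏ i, q (sv i))
    (hZ : ∃ z : 𝒳 → 𝒮 → 𝒵, ∀ (i : Fin n) ω, Z i ω = z (X i ω) (S i ω))
    (hX : ∀ i : Fin n, ∃ f : 𝕄 → (Fin n → 𝒮) → 𝒳, ∀ ω, X i ω = f (M ω) (fun j => S j ω))
    (hXr : ∀ i : Fin n, ∃ f : ({j : Fin n // j ≤ i} → 𝒵) → 𝒳r,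
        ∀ ω, Xr i ω = f (fun j => Z j.1 ω))
    (hmem : ∀ i : Fin n, CondIndepFun p (Y i)
        (fun ω => (M ω, fun j => S j ω, fun j : {j : Fin n // j < i} => Y j.1 ω))
        (fun ω => (X i ω, Xr i ω, S i ω)))
    (hFano : Hcond p M (fun ω => (fun i => Y i ω, fun i => S i ω)) ≤ n * eps) :
    (n : ℝ) * R ≤
      (∑ i : Fin n, Hcond p (Z i)
        (fun ω => ((fun j : {j : Fin n // j < i} => Z j.1 ω,
                    fun j : {j : Fin n // j < i} => S j.1 ω), S i ω)))
      + (∑ i : Fin n, Icond p (X i) (Y i)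
        (fun ω => ((fun j : {j : Fin n // j < i} => Z j.1 ω,
                    fun j : {j : Fin n // j < i} => S j.1 ω), Z i ω, S i ω)))
      + n * eps :=
  relay_without_delay_converse_one_general p hp n R eps M S X Xr Z Y hcard hMuniform hMindepS hZ hX
    hXr hmem hFano

end
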